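/- With p(n₁,n₂) = d·a^{n₁}·b^{n₂}·F[-n₁,-n₂;1,z] as above (a = N_T/(1+N_T), b = N_S(N_T-η+1)/((1+N_S)(1+N_T)), d = 1/((1+N_T)(1+N_S)), z = η/((N_T-η+1)N_T), 0<η<1, N_S>0, N_T>η), the second marginal mean satisfies ∑_{n₁,n₂} n₂ · p(n₁,n₂) = N_S. -/

import Mathlib

/-!
Summing first over `n₁` for fixed `n₂`, the inner sum over `k` is finite, and each
`∑_{n₁} C(n₁,k) aⁿ¹ = aᵏ / (1 - a)ᵏ⁺¹` is a negative-binomial series; the binomial theorem then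
collapses the row to `(1 - a)⁻¹ (1 + z a / (1 - a))ⁿ²`. For the given parameters the row sum is
`(1 - c) cⁿ²` with `c = N_S / (1 + N_S)`, so `n₂` is geometrically distributed with mean
`c / (1 - c) = N_S`. All terms are nonnegative, so the iterated sum is the double sum.
-/

open Finset

section Series

variable {𝕜 : Type*} [NormedField 𝕜]

theorem hasSum_choose_mul_pow_of_norm_lt_one (k : ℕ) {r : 𝕜} (hr : ‖r‖ < 1) :
    HasSum (fun n ↦ (n.choose k : 𝕜) * r ^ n) (r ^ k / (1 - r) ^ (k + 1)) := by
  have h_shift : HasSum (fun n ↦ ((n + k).choose k : 𝕜) * r ^ (n + k))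
      (r ^ k / (1 - r) ^ (k + 1)) := by
    rw [← mul_one_div]
    exact ((hasSum_choose_mul_geometric_of_norm_lt_one k hr).mul_left (r ^ k)).congr_fun
      fun n ↦ by ring
  have h_initial : ∑ i ∈ range k, (i.choose k : 𝕜) * r ^ i = 0 :=
    sum_eq_zero fun i hi ↦ by simp [Nat.choose_eq_zero_of_lt (mem_range.1 hi)]
  refine (hasSum_nat_add_iff' k).1 ?_
  rwa [h_initial, sub_zero]

theorem hasSum_pow_mul_sum_choose_mul_choose (m : ℕ) {a : 𝕜} (ha : ‖a‖ < 1) (z : 𝕜) :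
    HasSum (fun n ↦ a ^ n *
        ∑ k ∈ range (min n m + 1), (n.choose k : 𝕜) * (m.choose k : 𝕜) * z ^ k)
      ((1 - a)⁻¹ * (1 + z * a / (1 - a)) ^ m) := by
  have h1a : 1 - a ≠ 0 := sub_ne_zero.2 (by rintro rfl; simp at ha)
  have h_range (n : ℕ) :
      ∑ k ∈ range (min n m + 1), (n.choose k : 𝕜) * (m.choose k : 𝕜) * z ^ k =
        ∑ k ∈ range (m + 1), (n.choose k : 𝕜) * (m.choose k : 𝕜) * z ^ k := by
    refine sum_subset (range_subset_range.2 (by omega)) fun k hkm hkn ↦ ?_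
    simp only [mem_range] at hkm hkn
    simp [Nat.choose_eq_zero_of_lt (show n < k by omega)]
  have h := hasSum_sum (s := range (m + 1)) fun k _ ↦
    (hasSum_choose_mul_pow_of_norm_lt_one k ha).mul_left ((m.choose k : 𝕜) * z ^ k)
  have h_value : ∑ k ∈ range (m + 1), (m.choose k : 𝕜) * z ^ k * (a ^ k / (1 - a) ^ (k + 1)) =
      (1 - a)⁻¹ * (1 + z * a / (1 - a)) ^ m := by
    rw [add_comm 1, add_pow, mul_sum]
    refine sum_congr rfl fun k _ ↦ ?_
    rw [one_pow, mul_one, div_pow, mul_pow, pow_succ]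
    field_simp
  rw [← h_value]
  refine h.congr_fun fun n ↦ ?_
  rw [h_range, mul_sum]
  exact sum_congr rfl fun k _ ↦ by ring

theorem hasSum_coe_mul_one_sub_mul_geometric {r : 𝕜} (hr : ‖r‖ < 1) :
    HasSum (fun n : ℕ ↦ (n : 𝕜) * ((1 - r) * r ^ n)) (r / (1 - r)) := by
  have h1r : 1 - r ≠ 0 := sub_ne_zero.2 (by rintro rfl; simp at hr)
  have h_value : (1 - r) * (r / (1 - r) ^ 2) = r / (1 - r) := by
    field_simp
  rw [← h_value]
  exact ((hasSum_coe_mul_geometric_of_norm_lt_one hr).mul_left (1 - r)).congr_fun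
    fun n ↦ by ring

end Series

theorem hasSum_prod_of_nonneg_of_hasSum_fiber_snd {β γ : Type*} {f : β × γ → ℝ} (hf : 0 ≤ f)
    {g : γ → ℝ} {s : ℝ} (hfib : ∀ c, HasSum (fun b ↦ f (b, c)) (g c)) (hg : HasSum g s) :
    HasSum f s := by
  have hfib' : ∀ c, HasSum (fun b ↦ (f ∘ Prod.swap) (c, b)) (g c) := hfib
  have hsum : Summable (f ∘ Prod.swap) := by
    refine (summable_prod_of_nonneg fun p ↦ hf p.swap).2 ⟨fun c ↦ (hfib' c).summable, ?_⟩
    change Summable fun c ↦ ∑' b, f (b, c)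
    simpa only [(hfib _).tsum_eq] using hg.summable
  obtain ⟨t, ht⟩ := hsum
  rw [← (ht.prod_fiberwise hfib').unique hg]
  exact (Equiv.prodComm γ β).hasSum_iff.1 ht

theorem stmt12_general (η NS NT : ℝ) (hη0 : 0 < η) (hNS : 0 < NS) (hNT : η < NT) :
    let a := NT / (1 + NT)
    let b := NS * (NT - η + 1) / ((1 + NS) * (1 + NT))
    let d := 1 / ((1 + NT) * (1 + NS))
    let z := η / ((NT - η + 1) * NT)
    HasSum (fun p : ℕ × ℕ => (p.2 : ℝ) * (d * a ^ p.1 * b ^ p.2 *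
      ∑ k ∈ Finset.range (min p.1 p.2 + 1), (p.1.choose k : ℝ) * (p.2.choose k : ℝ) * z ^ k))
      NS := by
  intro a b d z
  have hNT0 : 0 < NT := hη0.trans hNT
  have hK : 0 < NT - η + 1 := by linarith
  have ha0 : 0 ≤ a := by positivity
  have ha : ‖a‖ < 1 := by
    rw [Real.norm_of_nonneg ha0, div_lt_one (by positivity)]
    linarith
  set c := NS / (1 + NS)
  have hc : ‖c‖ < 1 := by
    rw [Real.norm_of_nonneg (by positivity), div_lt_one (by positivity)]
    linarith
  have h_row (n₂ : ℕ) := (hasSum_pow_mul_sum_choose_mul_choose n₂ ha z).mul_left (n₂ * d * b ^ n₂)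
  have h_d : d * (1 - a)⁻¹ = 1 - c := by
    simp only [a, c, d]
    field_simp
    ring
  have h_b : b * (1 + z * a / (1 - a)) = c := by
    simp only [a, b, c, z]
    field_simp
    ring
  refine hasSum_prod_of_nonneg_of_hasSum_fiber_snd (fun p ↦ by positivity) (fun n₂ ↦ ?_)
    (g := fun n₂ : ℕ ↦ (n₂ : ℝ) * ((1 - c) * c ^ n₂)) ?_
  · rw [show (n₂ : ℝ) * ((1 - c) * c ^ n₂) =
        n₂ * d * b ^ n₂ * ((1 - a)⁻¹ * (1 + z * a / (1 - a)) ^ n₂) by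
      rw [← h_d, ← h_b, mul_pow]
      ring]
    exact (h_row n₂).congr_fun fun n₁ ↦ by ring
  · rw [show NS = c / (1 - c) by simp only [c]; field_simp; ring]
    exact hasSum_coe_mul_one_sub_mul_geometric hc

theorem stmt12 (η NS NT : ℝ) (hη0 : 0 < η) (hη1 : η < 1) (hNS : 0 < NS) (hNT : η < NT) :
    let a := NT / (1 + NT)
    let b := NS * (NT - η + 1) / ((1 + NS) * (1 + NT))
    let d := 1 / ((1 + NT) * (1 + NS))
    let z := η / ((NT - η + 1) * NT)
    HasSum (fun p : ℕ × ℕ => (p.2 : ℝ) * (d * a ^ p.1 * b ^ p.2 *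
      ∑ k ∈ Finset.range (min p.1 p.2 + 1), (p.1.choose k : ℝ) * (p.2.choose k : ℝ) * z ^ k))
      NS :=
  stmt12_general η NS NT hη0 hNS hNT
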